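/- arXiv:2002.04190 — 2 statements merged into one kernel-verified Lean document; each statement's English description precedes it below -/
import Mathlib

section
/- Let (a_n) be an arithmetic sequence and x ∈ 𝕋 with canonical representation x = Σ c_n/a_n. For all n ∈ ℕ, the fractional part satisfies the recursion {a_{n-1}x} = c_n/q_n + {a_n x}/q_n, where {y} ∈ [0,1) denotes the canonical representative of y mod 1. -/
open Filter Topology Set

/-- Upper natural density of a set of naturals. -/
noncomputable def upperDensity (A : Set ℕ) : ℝ :=
  Filter.limsup (fun n => (Nat.card ↥(A ∩ Set.Iio n) : ℝ) / n) Filter.atTop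

/-- `A` has natural density `δ`. -/
def HasDensity (A : Set ℕ) (δ : ℝ) : Prop :=
  Filter.Tendsto (fun n => (Nat.card ↥(A ∩ Set.Iio n) : ℝ) / n) Filter.atTop (nhds δ)

/-- Statistical convergence of a real sequence. -/
def StatTendsto (x : ℕ → ℝ) (ξ : ℝ) : Prop :=
  ∀ ε : ℝ, 0 < ε → HasDensity {n | ε ≤ |x n - ξ|} 0

/-- An arithmetic sequence: `a 0 = 1 < a 1 < a 2 < ⋯` and `a n ∣ a (n+1)`. -/
def IsArithmeticSeq (a : ℕ → ℕ) : Prop :=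
  a 0 = 1 ∧ StrictMono a ∧ ∀ n, a n ∣ a (n + 1)

/-- The ratio `q n = a n / a (n-1)` as a real number. -/
noncomputable def qr (a : ℕ → ℕ) (n : ℕ) : ℝ := (a n : ℝ) / (a (n - 1) : ℝ)

/-- `(c n)` is a canonical representation sequence w.r.t. `(a n)`:
`0 ≤ c n < q n` and `c n < q n - 1` for infinitely many `n`. -/
def IsCanonicalRep (a : ℕ → ℕ) (c : ℕ → ℕ) : Prop :=
  c 0 = 0 ∧ (∀ n, 1 ≤ n → c n < a n / a (n - 1)) ∧
    (∀ N, ∃ n, N ≤ n ∧ 1 ≤ n ∧ c n + 1 < a n / a (n - 1))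

/-- Support of (the canonical representation of) `x`. -/
def suppRep (c : ℕ → ℕ) : Set ℕ := {n | 1 ≤ n ∧ c n ≠ 0}

/-- `supp_q(x) = {n : c n = q n - 1}`. -/
def suppqRep (a c : ℕ → ℕ) : Set ℕ := {n | 1 ≤ n ∧ c n + 1 = a n / a (n - 1)}

/-- A set `S ⊆ ℕ` is `q`-bounded if `(q n)` is bounded on `S`. -/
def QBounded (a : ℕ → ℕ) (S : Set ℕ) : Prop := ∃ M, ∀ n ∈ S, a n / a (n - 1) ≤ M

/-- A set `S ⊆ ℕ` is `q`-divergent if `q n → ∞` along `n ∈ S`. -/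
def QDivergent (a : ℕ → ℕ) (S : Set ℕ) : Prop :=
  Filter.Tendsto (fun n => a n / a (n - 1)) (Filter.atTop ⊓ Filter.principal S) Filter.atTop

/-- Statistical convergence in a topological space, via neighborhoods. -/
def StatNhdTendsto {α : Type*} [TopologicalSpace α] (y : ℕ → α) (ℓ : α) : Prop :=
  ∀ U ∈ nhds ℓ, HasDensity {n | y n ∉ U} 0

/-! Multiplying `x = ∑ c_i / a_i` by `a_n` splits it into the integer `∑_{i ≤ n} c_i a_n / a_i`
(as `a_i ∣ a_n`) and `a_n` times the tail `∑_{i > n} c_i / a_i`. The digit bound `c_i + 1 ≤ q_i`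
reads `c_i / a_i ≤ 1 / a_{i-1} - 1 / a_i`, so the tail telescopes to at most `1 / a_n`, strictly
since `c_i < q_i - 1` for some `i > n`. Hence `{a_n x}` is `a_n` times the tail, and the recursion
is the identity `tail_{n-1} = c_n / a_n + tail_n`. -/

theorem hasSum_sub_succ_of_antitone {u : ℕ → ℝ} (hu : Antitone u)
    (hlim : Tendsto u atTop (𝓝 0)) : HasSum (fun i => u i - u (i + 1)) (u 0) := by
  rw [hasSum_iff_tendsto_nat_of_nonneg (fun i => sub_nonneg.2 (hu i.le_succ))]
  simp_rw [Finset.sum_range_sub']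
  simpa using tendsto_const_nhds.sub hlim

namespace IsArithmeticSeq

variable {a : ℕ → ℕ}

theorem pos (ha : IsArithmeticSeq a) (n : ℕ) : 0 < a n := by
  have := ha.2.1.monotone (Nat.zero_le n)
  rw [ha.1] at this
  omega

theorem dvd_of_le (ha : IsArithmeticSeq a) {m n : ℕ} (h : m ≤ n) : a m ∣ a n := by
  induction n, h using Nat.le_induction with
  | base => rfl
  | succ n _ ih => exact ih.trans (ha.2.2 n)

theorem hasSum_inv_sub_inv (ha : IsArithmeticSeq a) (n : ℕ) :
    HasSum (fun i => ((a (i + n) : ℝ))⁻¹ - ((a (i + n + 1) : ℝ))⁻¹) ((a n : ℝ))⁻¹ := by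
  have hanti : Antitone fun i => ((a (i + n) : ℝ))⁻¹ := fun i j hij =>
    inv_anti₀ (by exact_mod_cast ha.pos _)
      (by exact_mod_cast ha.2.1.monotone (Nat.add_le_add_right hij n))
  have hlim : Tendsto (fun i => ((a (i + n) : ℝ))⁻¹) atTop (𝓝 0) :=
    tendsto_inv_atTop_zero.comp <| tendsto_natCast_atTop_atTop.comp <|
      ha.2.1.tendsto_atTop.comp (tendsto_add_atTop_nat n)
  simpa only [Nat.add_right_comm _ 1 n, zero_add] using hasSum_sub_succ_of_antitone hanti hlim

end IsArithmeticSeq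

namespace IsCanonicalRep

variable {a c : ℕ → ℕ}

theorem digit_div_le (ha : IsArithmeticSeq a) (hc : IsCanonicalRep a c) (n : ℕ) :
    (c (n + 1) : ℝ) / a (n + 1) ≤ ((a n : ℝ))⁻¹ - ((a (n + 1) : ℝ))⁻¹ := by
  have h : (c (n + 1) + 1) * a n ≤ a (n + 1) :=
    (Nat.le_div_iff_mul_le (ha.pos n)).1 (hc.2.1 (n + 1) n.succ_pos)
  have hn : (0 : ℝ) < a n := by exact_mod_cast ha.pos n
  have hn1 : (0 : ℝ) < a (n + 1) := by exact_mod_cast ha.pos (n + 1)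
  rw [inv_eq_one_div, inv_eq_one_div, le_sub_iff_add_le, ← add_div,
    div_le_div_iff₀ hn1 hn, one_mul]
  exact_mod_cast h

theorem digit_div_lt (ha : IsArithmeticSeq a) {n : ℕ} (h : c (n + 1) + 1 < a (n + 1) / a n) :
    (c (n + 1) : ℝ) / a (n + 1) < ((a n : ℝ))⁻¹ - ((a (n + 1) : ℝ))⁻¹ := by
  have h : (c (n + 1) + 2) * a n ≤ a (n + 1) := (Nat.le_div_iff_mul_le (ha.pos n)).1 h
  have hn : (0 : ℝ) < a n := by exact_mod_cast ha.pos n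
  have hn1 : (0 : ℝ) < a (n + 1) := by exact_mod_cast ha.pos (n + 1)
  rw [inv_eq_one_div, inv_eq_one_div, lt_sub_iff_add_lt, ← add_div,
    div_lt_div_iff₀ hn1 hn, one_mul]
  have : (c (n + 1) + 1) * a n < a (n + 1) := by nlinarith [ha.pos n]
  exact_mod_cast this

theorem summable (ha : IsArithmeticSeq a) (hc : IsCanonicalRep a c) :
    Summable fun i => (c i : ℝ) / a i :=
  (summable_nat_add_iff 1).1 <| Summable.of_nonneg_of_le (fun _ => by positivity)
    (digit_div_le ha hc) (ha.hasSum_inv_sub_inv 0).summable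

theorem tsum_tail_lt (ha : IsArithmeticSeq a) (hc : IsCanonicalRep a c) (n : ℕ) :
    ∑' i, (c (i + (n + 1)) : ℝ) / a (i + (n + 1)) < ((a n : ℝ))⁻¹ := by
  obtain ⟨j, hj, -, hlt⟩ := hc.2.2 (n + 1)
  obtain ⟨i, rfl⟩ : ∃ i, j = i + n + 1 := ⟨j - (n + 1), by omega⟩
  have h := ha.hasSum_inv_sub_inv n
  exact (Summable.tsum_lt_tsum (i := i) (fun k => digit_div_le ha hc (k + n))
    (digit_div_lt ha hlt) ((summable_nat_add_iff (n + 1)).2 (hc.summable ha)) h.summable).trans_eq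
    h.tsum_eq

theorem fract_mul_tsum (ha : IsArithmeticSeq a) (hc : IsCanonicalRep a c) (n : ℕ) :
    Int.fract ((a n : ℝ) * ∑' i, (c i : ℝ) / a i) =
      a n * ∑' i, (c (i + (n + 1)) : ℝ) / a (i + (n + 1)) := by
  have hn : (0 : ℝ) < a n := by exact_mod_cast ha.pos n
  rw [Int.fract_eq_iff]
  refine ⟨by positivity, ?_, ⟨((∑ i ∈ Finset.range (n + 1), a n / a i * c i : ℕ) : ℤ), ?_⟩⟩
  · simpa [← lt_div_iff₀' hn] using tsum_tail_lt ha hc n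
  · rw [← (hc.summable ha).sum_add_tsum_nat_add (n + 1), mul_add, add_sub_cancel_right,
      Finset.mul_sum, Int.cast_natCast, Nat.cast_sum]
    refine Finset.sum_congr rfl fun i hi => ?_
    have hai : (0 : ℝ) < a i := by exact_mod_cast ha.pos i
    rw [Nat.cast_mul, Nat.cast_div (ha.dvd_of_le (Finset.mem_range_succ_iff.1 hi)) hai.ne']
    ring

end IsCanonicalRep

/-- Equation (7): `{a_{n-1} x} = c_n/q_n + {a_n x}/q_n` for all `n ≥ 1`. -/
theorem fract_recursion (a c : ℕ → ℕ) (ha : IsArithmeticSeq a)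
    (hc : IsCanonicalRep a c) :
    ∀ n, 1 ≤ n →
      Int.fract ((a (n - 1) : ℝ) * ∑' i, (c i : ℝ) / (a i : ℝ)) =
        (c n : ℝ) / qr a n +
          Int.fract ((a n : ℝ) * ∑' i, (c i : ℝ) / (a i : ℝ)) / qr a n := by
  intro n hn
  obtain ⟨m, rfl⟩ := Nat.exists_eq_add_of_le' hn
  have hm : (0 : ℝ) < a m := by exact_mod_cast ha.pos m
  have hm1 : (0 : ℝ) < a (m + 1) := by exact_mod_cast ha.pos (m + 1)
  have htail : ∑' i, (c (i + (m + 1)) : ℝ) / a (i + (m + 1)) =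
      (c (m + 1) : ℝ) / a (m + 1) + ∑' i, (c (i + (m + 1 + 1)) : ℝ) / a (i + (m + 1 + 1)) := by
    rw [((summable_nat_add_iff (m + 1)).2 (hc.summable ha)).tsum_eq_zero_add]
    simp only [zero_add, Nat.add_right_comm _ 1 (m + 1)]
    rfl
  rw [Nat.add_sub_cancel, hc.fract_mul_tsum ha m, hc.fract_mul_tsum ha (m + 1), htail, qr,
    Nat.add_sub_cancel]
  field_simp
end

section
/- A sequence (q_n) of natural numbers has the d-splitting property if and only if there exists a natural number M such that for every m > M, the set {n ∈ ℕ : M ≤ q_n ≤ m} has natural density zero. -/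
open Filter Topology Set

/-- The `d`-splitting property of a sequence `(q n)` of naturals. -/
def HasDSplitting (q : ℕ → ℕ) : Prop :=
  ∃ B D : Set ℕ, B ∪ D = Set.univ ∧ Disjoint B D ∧
    (B = ∅ ∨ 0 < upperDensity B) ∧ (D = ∅ ∨ 0 < upperDensity D) ∧
    (0 < upperDensity B →
      ∃ B' : Set ℕ, HasDensity (symmDiff B B') 0 ∧ ∃ M, ∀ n ∈ B', q n ≤ M) ∧
    (0 < upperDensity D →
      ∃ D' : Set ℕ, HasDensity (symmDiff D D') 0 ∧
        Filter.Tendsto q (Filter.atTop ⊓ Filter.principal D') Filter.atTop)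

/-- The splitting property of a sequence `(q n)` of naturals. -/
def HasSplitting (q : ℕ → ℕ) : Prop :=
  ∃ B I : Set ℕ, B ∪ I = Set.univ ∧ Disjoint B I ∧
    (B = ∅ ∨ B.Infinite) ∧ (I = ∅ ∨ I.Infinite) ∧
    (B.Infinite → ∃ M, ∀ n ∈ B, q n ≤ M) ∧
    (I.Infinite → Filter.Tendsto q (Filter.atTop ⊓ Filter.principal I) Filter.atTop)

/-!
Sets of density zero form an ideal that is closed under diagonal countable unions: for an
increasing sequence of null sets `A k` there are thresholds `N k` such that
`⋃ k, A k ∩ [N k, ∞)` is still null. Applied to `A k = {n | M ≤ q n ≤ k}`, this removes a null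
set from `{n | M ≤ q n}` along whose complement `q n → ∞`, while `q < M` on the rest.
Conversely, a `d`-splitting gives, up to null sets, a part where `q ≤ M₀` and a part where
`q → ∞`, so every window `{M₀ < q n ≤ m}` is null. The positivity conditions on the upper
densities of `B` and `D` are harmless: a part of upper density zero is null and can be absorbed
into the other part.
-/

noncomputable def partialDensity (A : Set ℕ) (n : ℕ) : ℝ :=
  (Nat.card ↥(A ∩ Iio n) : ℝ) / n

section PartialDensity

variable {A B : Set ℕ}

theorem partialDensity_nonneg (A : Set ℕ) (n : ℕ) : 0 ≤ partialDensity A n := by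
  unfold partialDensity; positivity

theorem partialDensity_le_of_inter_Iio_subset {n : ℕ} (h : A ∩ Iio n ⊆ B) :
    partialDensity A n ≤ partialDensity B n :=
  div_le_div_of_nonneg_right
    (Nat.cast_le.2 (Nat.card_mono ((finite_Iio n).inter_of_right B)
      (subset_inter h inter_subset_right)))
    n.cast_nonneg

theorem partialDensity_mono (h : A ⊆ B) (n : ℕ) : partialDensity A n ≤ partialDensity B n :=
  partialDensity_le_of_inter_Iio_subset (inter_subset_left.trans h)

theorem partialDensity_univ {n : ℕ} (hn : n ≠ 0) : partialDensity univ n = 1 := by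
  simp [partialDensity, hn]

theorem partialDensity_le_one (A : Set ℕ) (n : ℕ) : partialDensity A n ≤ 1 := by
  rcases eq_or_ne n 0 with rfl | hn
  · simp [partialDensity]
  · exact (partialDensity_mono (subset_univ A) n).trans (partialDensity_univ hn).le

theorem partialDensity_union_le (A B : Set ℕ) (n : ℕ) :
    partialDensity (A ∪ B) n ≤ partialDensity A n + partialDensity B n := by
  simp only [partialDensity, ← add_div, union_inter_distrib_right, Nat.card_coe_set_eq]
  gcongr
  exact_mod_cast ncard_union_le _ _

end PartialDensity

section HasDensity

variable {A B : Set ℕ}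

theorem HasDensity.mono (hB : HasDensity B 0) (h : A ⊆ B) : HasDensity A 0 :=
  squeeze_zero (partialDensity_nonneg A) (partialDensity_mono h) hB

theorem HasDensity.union (hA : HasDensity A 0) (hB : HasDensity B 0) : HasDensity (A ∪ B) 0 :=
  squeeze_zero (partialDensity_nonneg _) (partialDensity_union_le A B)
    (by rw [← add_zero (0 : ℝ)]; exact hA.add hB)

theorem Set.Finite.hasDensity_zero (hA : A.Finite) : HasDensity A 0 :=
  squeeze_zero (partialDensity_nonneg A)
    (fun n => div_le_div_of_nonneg_right
      (Nat.cast_le.2 (Nat.card_mono hA inter_subset_left)) n.cast_nonneg)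
    (tendsto_const_div_atTop_nhds_zero_nat _)

theorem upperDensity_univ : upperDensity univ = 1 := by
  change limsup (partialDensity univ) atTop = 1
  rw [limsup_congr ((eventually_ne_atTop 0).mono fun n => partialDensity_univ), limsup_const]

theorem hasDensity_zero_of_upperDensity_nonpos (h : upperDensity A ≤ 0) : HasDensity A 0 := by
  refine tendsto_order.2 ⟨fun a ha => .of_forall fun n => ha.trans_le (partialDensity_nonneg A n),
    fun a ha => eventually_lt_of_limsup_lt (h.trans_lt ha) ?_⟩
  exact isBoundedUnder_of ⟨1, partialDensity_le_one A⟩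

end HasDensity

theorem hasDensity_symmDiff_self (A : Set ℕ) : HasDensity (symmDiff A A) 0 := by
  simpa using finite_empty.hasDensity_zero

theorem exists_hasDensity_iUnion_inter_Ici {A : ℕ → Set ℕ} (hmono : Monotone A)
    (hA : ∀ k, HasDensity (A k) 0) :
    ∃ N : ℕ → ℕ, HasDensity (⋃ k, A k ∩ Ici (N k)) 0 := by
  choose N hN using fun k => eventually_atTop.1 <|
    ((hA k).eventually (gt_mem_nhds (Nat.one_div_pos_of_nat (α := ℝ) (n := k)))).and
      (eventually_ge_atTop k)
  have hkN : ∀ k, k ≤ N k := fun k => (hN k (N k) le_rfl).2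
  refine ⟨N, tendsto_order.2 ⟨fun a ha => .of_forall fun n => ha.trans_le
    (partialDensity_nonneg _ n), fun ε hε => ?_⟩⟩
  obtain ⟨k₀, hk₀⟩ := exists_nat_one_div_lt hε
  filter_upwards [eventually_gt_atTop (N k₀)] with x hx
  -- Below `x`, the union is contained in `A K` for the largest `K` whose threshold lies below `x`.
  set P : ℕ → Prop := fun k => N k < x
  set K := Nat.findGreatest P x
  have hk₀x : k₀ ≤ x := (hkN k₀).trans hx.le
  have hsub : (⋃ k, A k ∩ Ici (N k)) ∩ Iio x ⊆ A K := by
    rintro n ⟨hn, hnx : n < x⟩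
    obtain ⟨k, hnk, hNn : N k ≤ n⟩ := mem_iUnion.1 hn
    have hkK : k ≤ K := Nat.le_findGreatest ((hkN k).trans (hNn.trans hnx.le)) (hNn.trans_lt hnx)
    exact hmono hkK hnk
  calc partialDensity (⋃ k, A k ∩ Ici (N k)) x
      ≤ partialDensity (A K) x := partialDensity_le_of_inter_Iio_subset hsub
    _ < 1 / (K + 1) := (hN K x (Nat.findGreatest_spec (P := P) hk₀x hx).le).1
    _ ≤ 1 / (k₀ + 1) := Nat.one_div_le_one_div (Nat.le_findGreatest (P := P) hk₀x hx)
    _ < ε := hk₀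

theorem exists_hasDensity_diff_tendsto_atTop {S : Set ℕ} {q : ℕ → ℕ}
    (h : ∀ k, HasDensity (S ∩ {n | q n ≤ k}) 0) :
    ∃ D, HasDensity (S \ D) 0 ∧ Tendsto q (atTop ⊓ 𝓟 D) atTop := by
  have hmono : Monotone fun k => S ∩ {n | q n ≤ k} :=
    fun j k hjk => inter_subset_inter_right _ fun n hn => le_trans hn hjk
  obtain ⟨N, hN⟩ := exists_hasDensity_iUnion_inter_Ici hmono h
  refine ⟨S \ ⋃ k, (S ∩ {n | q n ≤ k}) ∩ Ici (N k), hN.mono ?_, tendsto_atTop.2 fun b => ?_⟩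
  · rw [sdiff_sdiff_right_self]
    exact inter_subset_right
  · rw [eventually_inf_principal]
    filter_upwards [eventually_ge_atTop (N b)] with n hn hnD
    by_contra! hlt
    exact hnD.2 (mem_iUnion.2 ⟨b, ⟨hnD.1, hlt.le⟩, hn⟩)

def IsAlmostSplitting (q : ℕ → ℕ) (B D : Set ℕ) : Prop :=
  HasDensity (B ∪ D)ᶜ 0 ∧ (∃ M, ∀ n ∈ B, q n ≤ M) ∧ Tendsto q (atTop ⊓ 𝓟 D) atTop

theorem HasDSplitting.exists_isAlmostSplitting {q : ℕ → ℕ} (h : HasDSplitting q) :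
    ∃ B D, IsAlmostSplitting q B D := by
  obtain ⟨B, D, hcover, -, hB₀, hD₀, hB, hD⟩ := h
  obtain ⟨B', hBB', hbdd⟩ : ∃ B', HasDensity (symmDiff B B') 0 ∧ ∃ M, ∀ n ∈ B', q n ≤ M := by
    rcases hB₀ with rfl | hpos
    · exact ⟨∅, hasDensity_symmDiff_self ∅, 0, by simp⟩
    · exact hB hpos
  obtain ⟨D', hDD', htends⟩ :
      ∃ D', HasDensity (symmDiff D D') 0 ∧ Tendsto q (atTop ⊓ 𝓟 D') atTop := by
    rcases hD₀ with rfl | hpos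
    · exact ⟨∅, hasDensity_symmDiff_self ∅, by simp⟩
    · exact hD hpos
  refine ⟨B', D', (hBB'.union hDD').mono fun n hn => ?_, hbdd, htends⟩
  have : n ∈ B ∪ D := hcover ▸ mem_univ n
  simp only [mem_compl_iff, mem_union, mem_symmDiff] at hn this ⊢
  tauto

theorem IsAlmostSplitting.hasDSplitting {q : ℕ → ℕ} {B D : Set ℕ}
    (h : IsAlmostSplitting q B D) : HasDSplitting q := by
  obtain ⟨hnull, hbdd, htends⟩ := h
  have huniv : 0 < upperDensity univ := upperDensity_univ ▸ one_pos
  by_cases hB : 0 < upperDensity B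
  · by_cases hBc : 0 < upperDensity Bᶜ
    · refine ⟨B, Bᶜ, union_compl_self B, disjoint_compl_right, .inr hB, .inr hBc,
        fun _ => ⟨B, hasDensity_symmDiff_self B, hbdd⟩,
        fun _ => ⟨D \ B, hnull.mono fun n hn => ?_,
          htends.mono_left (inf_le_inf_left _ (principal_mono.2 sdiff_subset))⟩⟩
      simp only [mem_compl_iff, mem_union, mem_symmDiff, Set.mem_sdiff] at hn ⊢
      tauto
    · refine ⟨univ, ∅, union_empty _, disjoint_empty _, .inr huniv, .inl rfl,
        fun _ => ⟨B, (hasDensity_zero_of_upperDensity_nonpos (not_lt.1 hBc)).mono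
          fun n hn => ?_, hbdd⟩, fun _ => ⟨∅, hasDensity_symmDiff_self ∅, by simp⟩⟩
      simp only [mem_compl_iff, mem_symmDiff, mem_univ] at hn ⊢
      tauto
  · refine ⟨∅, univ, empty_union _, empty_disjoint _, .inl rfl, .inr huniv,
      fun _ => ⟨∅, hasDensity_symmDiff_self ∅, 0, by simp⟩,
      fun _ => ⟨D, ((hasDensity_zero_of_upperDensity_nonpos (not_lt.1 hB)).union hnull).mono
        fun n hn => ?_, htends⟩⟩
    simp only [mem_compl_iff, mem_union, mem_symmDiff, mem_univ] at hn ⊢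
    tauto

theorem IsAlmostSplitting.exists_forall_hasDensity_zero {q : ℕ → ℕ} {B D : Set ℕ}
    (h : IsAlmostSplitting q B D) :
    ∃ M : ℕ, ∀ m, M < m → HasDensity {n | M ≤ q n ∧ q n ≤ m} 0 := by
  obtain ⟨hnull, ⟨M, hM⟩, htends⟩ := h
  refine ⟨M + 1, fun m _ => ?_⟩
  obtain ⟨N, hN⟩ :=
    eventually_atTop.1 (eventually_inf_principal.1 (tendsto_atTop.1 htends (m + 1)))
  refine (hnull.union (finite_Iio N).hasDensity_zero).mono fun n ⟨hMn, hnm⟩ => ?_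
  by_contra hn
  simp only [mem_union, mem_compl_iff, mem_Iio] at hn
  push Not at hn
  obtain ⟨hB | hD, hNn⟩ := hn
  · exact absurd (hM n hB) (by omega)
  · exact absurd (hN n hNn hD) (by omega)

theorem exists_isAlmostSplitting_of_forall_hasDensity_zero {q : ℕ → ℕ} {M : ℕ}
    (h : ∀ m, M < m → HasDensity {n | M ≤ q n ∧ q n ≤ m} 0) :
    ∃ B D, IsAlmostSplitting q B D := by
  obtain ⟨D, hnull, htends⟩ := exists_hasDensity_diff_tendsto_atTop (S := {n | M ≤ q n}) (q := q)
    fun k => (h (M + k + 1) (by omega)).mono fun n ⟨hMn, hnk⟩ => ⟨hMn, hnk.trans (by omega)⟩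
  refine ⟨{n | q n < M}, D, hnull.mono fun n hn => ?_, ⟨M, fun n hn => hn.le⟩, htends⟩
  simpa only [compl_union, mem_inter_iff, mem_compl_iff, mem_ofPred_eq, not_lt,
    Set.mem_sdiff] using hn

/-- Proposition: `(q n)` has the `d`-splitting property iff there is `M` such
that `{n : M ≤ q n ≤ m}` has density zero for every `m > M`. -/
theorem hasDSplitting_iff (q : ℕ → ℕ) :
    HasDSplitting q ↔
      ∃ M : ℕ, ∀ m, M < m → HasDensity {n | M ≤ q n ∧ q n ≤ m} 0 := by
  constructor
  · intro h
    obtain ⟨B, D, hBD⟩ := h.exists_isAlmostSplitting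
    exact hBD.exists_forall_hasDensity_zero
  · rintro ⟨M, hM⟩
    obtain ⟨B, D, hBD⟩ := exists_isAlmostSplitting_of_forall_hasDensity_zero hM
    exact hBD.hasDSplitting
end
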